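/- For every w ∈ ℝ^d, the sub-optimality gap of the regularized loss at w relative to the point −c/λ satisfies L_λ(w) − L_λ(−c/λ) ≤ 2λD² ‖w + c/λ‖₂². -/

import Mathlib

/-!
With `F = logPartition X`, the gradient of `F` at `v` is the Gibbs mean `μ(v)` and
`H(v) = ⟨v, μ(v)⟩ - F(v)`. Hence the Gibbs component of `L_λ` at scale `s ∈ {1, ρ}`,
`⟨c, μ(s w)⟩ + (λ/s) H(s w)`, equals `λ ⟨w + c/λ, μ(s w)⟩ - (λ/s) F(s w)`, and its gap against
`w* = -c/λ` is `λ/s` times the Bregman divergence of `F` between `s w*` and `s w`.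
A Hoeffding-type bound on the centered exponent `⟨h, x - μ(v)⟩ ∈ [-2D‖h‖, 2D‖h‖]` gives
`F(v + h) ≤ F(v) + ⟨h, μ(v)⟩ + 2D²‖h‖²`, so that gap is at most `2λsD²‖w + c/λ‖²`;
averaging over the two scales with weights `1 - β`, `β` and using `ρ ≤ 1` concludes.
-/

open Finset
open scoped InnerProductSpace BigOperators

noncomputable section

/-- The Gibbs distribution on a finite set `X ⊆ ℝ^d` with parameter `w`:
`φ(x; w) = exp(w·x) / ∑_{y ∈ X} exp(w·y)`. -/
def gibbs {d : ℕ} (X : Finset (EuclideanSpace ℝ (Fin d)))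
    (w x : EuclideanSpace ℝ (Fin d)) : ℝ :=
  Real.exp ⟪w, x⟫_ℝ / ∑ y ∈ X, Real.exp ⟪w, y⟫_ℝ

/-- Expectation of a real function under the Gibbs distribution. -/
def gibbsExp {d : ℕ} (X : Finset (EuclideanSpace ℝ (Fin d)))
    (w : EuclideanSpace ℝ (Fin d)) (f : EuclideanSpace ℝ (Fin d) → ℝ) : ℝ :=
  ∑ x ∈ X, gibbs X w x * f x

/-- Variance of a real function under the Gibbs distribution. -/
def gibbsVar {d : ℕ} (X : Finset (EuclideanSpace ℝ (Fin d)))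
    (w : EuclideanSpace ℝ (Fin d)) (f : EuclideanSpace ℝ (Fin d) → ℝ) : ℝ :=
  gibbsExp X w (fun x => f x ^ 2) - (gibbsExp X w f) ^ 2

/-- Mean (a vector) of the Gibbs distribution. -/
def gibbsMean {d : ℕ} (X : Finset (EuclideanSpace ℝ (Fin d)))
    (w : EuclideanSpace ℝ (Fin d)) : EuclideanSpace ℝ (Fin d) :=
  ∑ x ∈ X, gibbs X w x • x

/-- The negative entropy `H(w) = E_{x ∼ φ(·;w)}[log φ(x;w)]`. -/
def negEnt {d : ℕ} (X : Finset (EuclideanSpace ℝ (Fin d)))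
    (w : EuclideanSpace ℝ (Fin d)) : ℝ :=
  ∑ x ∈ X, gibbs X w x * Real.log (gibbs X w x)


/-- The fast/slow mixture generator `p(x;w) = (1−β)φ(x;w) + βφ(x;ρw)`. -/
def pmix {d : ℕ} (X : Finset (EuclideanSpace ℝ (Fin d))) (β ρ : ℝ)
    (w x : EuclideanSpace ℝ (Fin d)) : ℝ :=
  (1 - β) * gibbs X w x + β * gibbs X (ρ • w) x

/-- The regularizer `R(w) = (1−β)H(w) + (β/ρ)H(ρw)`. -/
def reg {d : ℕ} (X : Finset (EuclideanSpace ℝ (Fin d))) (β ρ : ℝ)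
    (w : EuclideanSpace ℝ (Fin d)) : ℝ :=
  (1 - β) * negEnt X w + (β / ρ) * negEnt X (ρ • w)

/-- The regularized loss `L_λ(w) = E_{x∼p(·;w)}[c·x] + λ R(w)`. -/
def rloss {d : ℕ} (X : Finset (EuclideanSpace ℝ (Fin d))) (β ρ lam : ℝ)
    (c w : EuclideanSpace ℝ (Fin d)) : ℝ :=
  (∑ x ∈ X, pmix X β ρ w x * ⟪c, x⟫_ℝ) + lam * reg X β ρ w

/-- Convexity of `exp` on `[-M, M]`: it lies below its chord there. -/
lemma Real.exp_le_cosh_add_mul_sinh_div {t M : ℝ} (ht : |t| ≤ M) (hM : 0 < M) :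
    Real.exp t ≤ Real.cosh M + t * (Real.sinh M / M) := by
  obtain ⟨htl, htr⟩ := abs_le.1 ht
  have hl : 0 ≤ (M - t) / (2 * M) := div_nonneg (by linarith) (by linarith)
  have hr : 0 ≤ (M + t) / (2 * M) := div_nonneg (by linarith) (by linarith)
  have hsum : (M - t) / (2 * M) + (M + t) / (2 * M) = 1 := by field_simp; ring
  have hchord := convexOn_exp.2 (Set.mem_univ (-M)) (Set.mem_univ M) hl hr hsum
  have hpoint : (M - t) / (2 * M) * -M + (M + t) / (2 * M) * M = t := by field_simp; ring
  simp only [smul_eq_mul, hpoint] at hchord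
  calc Real.exp t ≤ (M - t) / (2 * M) * Real.exp (-M) + (M + t) / (2 * M) * Real.exp M := hchord
    _ = Real.cosh M + t * (Real.sinh M / M) := by
      rw [Real.cosh_eq, Real.sinh_eq]; field_simp; ring

/-- A finite form of Hoeffding's lemma (with the weaker constant that the chord bound gives). -/
lemma Finset.sum_mul_exp_le_exp_add_sq_div_two {ι : Type*} {s : Finset ι} {p b : ι → ℝ} {M : ℝ}
    (hp : ∀ i ∈ s, 0 ≤ p i) (hp1 : ∑ i ∈ s, p i = 1)
    (hb : ∀ i ∈ s, |b i - ∑ j ∈ s, p j * b j| ≤ M) :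
    ∑ i ∈ s, p i * Real.exp (b i) ≤ Real.exp (∑ i ∈ s, p i * b i + M ^ 2 / 2) := by
  set m := ∑ j ∈ s, p j * b j
  have hcentered : ∑ i ∈ s, p i * (b i - m) = 0 := by
    simp only [mul_sub, Finset.sum_sub_distrib, ← Finset.sum_mul, hp1, one_mul, m, sub_self]
  have hcosh : ∑ i ∈ s, p i * Real.exp (b i - m) ≤ Real.cosh M := by
    rcases le_or_gt M 0 with hM | hM
    · have hbm : ∀ i ∈ s, b i - m = 0 := fun i hi => abs_nonpos_iff.1 ((hb i hi).trans hM)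
      rw [Finset.sum_congr rfl fun i hi => by rw [hbm i hi, Real.exp_zero, mul_one], hp1]
      exact Real.one_le_cosh M
    calc ∑ i ∈ s, p i * Real.exp (b i - m)
        ≤ ∑ i ∈ s, p i * (Real.cosh M + (b i - m) * (Real.sinh M / M)) :=
          Finset.sum_le_sum fun i hi => mul_le_mul_of_nonneg_left
            (Real.exp_le_cosh_add_mul_sinh_div (hb i hi) hM) (hp i hi)
      _ = Real.cosh M + (∑ i ∈ s, p i * (b i - m)) * (Real.sinh M / M) := by
          simp only [mul_add, Finset.sum_add_distrib, ← Finset.sum_mul, hp1, one_mul, ← mul_assoc]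
      _ = Real.cosh M := by rw [hcentered, zero_mul, add_zero]
  calc ∑ i ∈ s, p i * Real.exp (b i)
      = Real.exp m * ∑ i ∈ s, p i * Real.exp (b i - m) := by
        rw [Finset.mul_sum]
        exact Finset.sum_congr rfl fun i _ => by rw [Real.exp_sub]; field_simp
    _ ≤ Real.exp m * Real.exp (M ^ 2 / 2) :=
        mul_le_mul_of_nonneg_left (hcosh.trans (Real.cosh_le_exp_half_sq M)) (Real.exp_pos m).le
    _ = Real.exp (m + M ^ 2 / 2) := (Real.exp_add _ _).symm

def logPartition {d : ℕ} (X : Finset (EuclideanSpace ℝ (Fin d)))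
    (v : EuclideanSpace ℝ (Fin d)) : ℝ :=
  Real.log (∑ y ∈ X, Real.exp ⟪v, y⟫_ℝ)

section Gibbs

variable {d : ℕ} {X : Finset (EuclideanSpace ℝ (Fin d))}

lemma sum_exp_inner_pos (hX : X.Nonempty) (v : EuclideanSpace ℝ (Fin d)) :
    0 < ∑ y ∈ X, Real.exp ⟪v, y⟫_ℝ :=
  Finset.sum_pos (fun _ _ => Real.exp_pos _) hX

lemma gibbs_nonneg (v x : EuclideanSpace ℝ (Fin d)) : 0 ≤ gibbs X v x :=
  div_nonneg (Real.exp_pos _).le (Finset.sum_nonneg fun _ _ => (Real.exp_pos _).le)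

lemma sum_gibbs (hX : X.Nonempty) (v : EuclideanSpace ℝ (Fin d)) :
    ∑ x ∈ X, gibbs X v x = 1 := by
  simp only [gibbs, ← Finset.sum_div]
  exact div_self (sum_exp_inner_pos hX v).ne'

lemma log_gibbs (hX : X.Nonempty) (v x : EuclideanSpace ℝ (Fin d)) :
    Real.log (gibbs X v x) = ⟪v, x⟫_ℝ - logPartition X v := by
  rw [gibbs, Real.log_div (Real.exp_ne_zero _) (sum_exp_inner_pos hX v).ne', Real.log_exp,
    logPartition]

lemma inner_gibbsMean (h v : EuclideanSpace ℝ (Fin d)) :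
    ⟪h, gibbsMean X v⟫_ℝ = ∑ x ∈ X, gibbs X v x * ⟪h, x⟫_ℝ := by
  rw [gibbsMean, inner_sum]
  exact Finset.sum_congr rfl fun x _ => real_inner_smul_right _ _ _

lemma norm_gibbsMean_le (hX : X.Nonempty) {D : ℝ} (hD : ∀ x ∈ X, ‖x‖ ≤ D)
    (v : EuclideanSpace ℝ (Fin d)) : ‖gibbsMean X v‖ ≤ D :=
  calc ‖gibbsMean X v‖ ≤ ∑ x ∈ X, gibbs X v x * ‖x‖ := by
        refine (norm_sum_le _ _).trans_eq (Finset.sum_congr rfl fun x _ => ?_)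
        rw [norm_smul, Real.norm_of_nonneg (gibbs_nonneg v x)]
    _ ≤ ∑ x ∈ X, gibbs X v x * D :=
        Finset.sum_le_sum fun x hx => mul_le_mul_of_nonneg_left (hD x hx) (gibbs_nonneg v x)
    _ = D := by rw [← Finset.sum_mul, sum_gibbs hX, one_mul]

lemma negEnt_eq_inner_sub_logPartition (hX : X.Nonempty) (v : EuclideanSpace ℝ (Fin d)) :
    negEnt X v = ⟪v, gibbsMean X v⟫_ℝ - logPartition X v := by
  simp only [negEnt, log_gibbs hX, mul_sub, Finset.sum_sub_distrib, ← Finset.sum_mul,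
    sum_gibbs hX, one_mul, inner_gibbsMean]

lemma logPartition_add_sub (hX : X.Nonempty) (v h : EuclideanSpace ℝ (Fin d)) :
    logPartition X (v + h) - logPartition X v
      = Real.log (∑ x ∈ X, gibbs X v x * Real.exp ⟪h, x⟫_ℝ) := by
  have hZ := sum_exp_inner_pos hX v
  rw [logPartition, logPartition, ← Real.log_div (sum_exp_inner_pos hX _).ne' hZ.ne',
    Finset.sum_div]
  congr 1
  refine Finset.sum_congr rfl fun x _ => ?_
  rw [gibbs, inner_add_left, Real.exp_add]
  ring

lemma logPartition_add_le (hX : X.Nonempty) {D : ℝ} (hD : ∀ x ∈ X, ‖x‖ ≤ D)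
    (v h : EuclideanSpace ℝ (Fin d)) :
    logPartition X (v + h)
      ≤ logPartition X v + ⟪h, gibbsMean X v⟫_ℝ + 2 * D ^ 2 * ‖h‖ ^ 2 := by
  have hdev : ∀ x ∈ X,
      |⟪h, x⟫_ℝ - ∑ y ∈ X, gibbs X v y * ⟪h, y⟫_ℝ| ≤ 2 * D * ‖h‖ := fun x hx =>
    calc |⟪h, x⟫_ℝ - ∑ y ∈ X, gibbs X v y * ⟪h, y⟫_ℝ| = |⟪h, x - gibbsMean X v⟫_ℝ| := by
          rw [inner_sub_right, inner_gibbsMean]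
      _ ≤ ‖h‖ * ‖x - gibbsMean X v‖ := abs_real_inner_le_norm _ _
      _ ≤ ‖h‖ * (D + D) := mul_le_mul_of_nonneg_left
          ((norm_sub_le _ _).trans (add_le_add (hD x hx) (norm_gibbsMean_le hX hD v)))
          (norm_nonneg h)
      _ = 2 * D * ‖h‖ := by ring
  have hmgf := Finset.sum_mul_exp_le_exp_add_sq_div_two (fun x _ => gibbs_nonneg v x)
    (sum_gibbs hX v) hdev
  have hpos : 0 < ∑ x ∈ X, gibbs X v x * Real.exp ⟪h, x⟫_ℝ :=
    Finset.sum_pos (fun x _ => mul_pos (div_pos (Real.exp_pos _) (sum_exp_inner_pos hX v))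
      (Real.exp_pos _)) hX
  have hlog := Real.log_le_log hpos hmgf
  rw [Real.log_exp, ← inner_gibbsMean, ← logPartition_add_sub hX] at hlog
  linarith

end Gibbs

def scaledLoss {d : ℕ} (X : Finset (EuclideanSpace ℝ (Fin d))) (lam s : ℝ)
    (c w : EuclideanSpace ℝ (Fin d)) : ℝ :=
  ⟪c, gibbsMean X (s • w)⟫_ℝ + lam / s * negEnt X (s • w)

section ScaledLoss

variable {d : ℕ} {X : Finset (EuclideanSpace ℝ (Fin d))}

lemma rloss_eq_scaledLoss (β ρ lam : ℝ) (c w : EuclideanSpace ℝ (Fin d)) :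
    rloss X β ρ lam c w = (1 - β) * scaledLoss X lam 1 c w + β * scaledLoss X lam ρ c w := by
  have hexp : ∀ v, ∑ x ∈ X, gibbs X v x * ⟪c, x⟫_ℝ = ⟪c, gibbsMean X v⟫_ℝ := fun v =>
    (inner_gibbsMean c v).symm
  simp only [rloss, pmix, reg, scaledLoss, add_mul, Finset.sum_add_distrib, mul_assoc,
    ← Finset.mul_sum, hexp, one_smul, div_one]
  ring

lemma scaledLoss_eq (hX : X.Nonempty) {lam s : ℝ} (hlam : lam ≠ 0) (hs : s ≠ 0)
    (c w : EuclideanSpace ℝ (Fin d)) :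
    scaledLoss X lam s c w
      = lam * ⟪w + lam⁻¹ • c, gibbsMean X (s • w)⟫_ℝ - lam / s * logPartition X (s • w) := by
  rw [scaledLoss, negEnt_eq_inner_sub_logPartition hX, inner_add_left, real_inner_smul_left,
    real_inner_smul_left]
  field_simp
  ring

lemma scaledLoss_sub_le (hX : X.Nonempty) {D : ℝ} (hD : ∀ x ∈ X, ‖x‖ ≤ D) {lam s : ℝ}
    (hlam : 0 < lam) (hs : 0 < s) (c w : EuclideanSpace ℝ (Fin d)) :
    scaledLoss X lam s c w - scaledLoss X lam s c (-(lam⁻¹ • c))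
      ≤ 2 * lam * s * D ^ 2 * ‖w + lam⁻¹ • c‖ ^ 2 := by
  have hsmooth := logPartition_add_le hX hD (s • w) (-(s • (w + lam⁻¹ • c)))
  have hshift : s • w + -(s • (w + lam⁻¹ • c)) = s • -(lam⁻¹ • c) := by
    rw [smul_add, smul_neg]; abel
  rw [hshift, inner_neg_left, real_inner_smul_left, norm_neg, norm_smul, Real.norm_of_nonneg hs.le]
    at hsmooth
  rw [scaledLoss_eq hX hlam.ne' hs.ne', scaledLoss_eq hX hlam.ne' hs.ne', neg_add_cancel,
    inner_zero_left]
  have hscaled := mul_le_mul_of_nonneg_left hsmooth (div_nonneg hlam.le hs.le)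
  have hexpand : ∀ F a n : ℝ, lam / s * (F + -(s * a) + 2 * D ^ 2 * (s * n) ^ 2)
      = lam / s * F - lam * a + 2 * lam * s * D ^ 2 * n ^ 2 := fun F a n => by
    field_simp; ring
  rw [hexpand] at hscaled
  linarith

end ScaledLoss

theorem rloss_suboptimality_gap_bound_general {d : ℕ}
    (X : Finset (EuclideanSpace ℝ (Fin d))) (hX : X.Nonempty)
    (D : ℝ) (hD : ∀ x ∈ X, ‖x‖ ≤ D)
    (β ρ : ℝ) (hβ : β ∈ Set.Ioo (0 : ℝ) 1) (hρ : ρ ∈ Set.Ioo (0 : ℝ) 1)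
    (c : EuclideanSpace ℝ (Fin d)) (lam : ℝ) (hlam : 0 < lam) :
    ∀ w : EuclideanSpace ℝ (Fin d),
      rloss X β ρ lam c w - rloss X β ρ lam c (-(lam⁻¹ • c))
        ≤ 2 * lam * D ^ 2 * ‖w + lam⁻¹ • c‖ ^ 2 := by
  intro w
  obtain ⟨hβ0, hβ1⟩ := hβ
  have hfast := scaledLoss_sub_le hX hD hlam one_pos c w
  have hslow := scaledLoss_sub_le hX hD hlam hρ.1 c w
  have hK : 0 ≤ 2 * lam * D ^ 2 * ‖w + lam⁻¹ • c‖ ^ 2 := by positivity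
  rw [rloss_eq_scaledLoss, rloss_eq_scaledLoss]
  calc _ = (1 - β) * (scaledLoss X lam 1 c w - scaledLoss X lam 1 c (-(lam⁻¹ • c)))
        + β * (scaledLoss X lam ρ c w - scaledLoss X lam ρ c (-(lam⁻¹ • c))) := by ring
    _ ≤ (1 - β) * (2 * lam * 1 * D ^ 2 * ‖w + lam⁻¹ • c‖ ^ 2)
        + β * (2 * lam * ρ * D ^ 2 * ‖w + lam⁻¹ • c‖ ^ 2) := by gcongr
    _ ≤ 2 * lam * D ^ 2 * ‖w + lam⁻¹ • c‖ ^ 2 := by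
      linarith [mul_le_mul_of_nonneg_left hρ.2.le (mul_nonneg hβ0.le hK)]

/-- For every `w`, the sub-optimality gap of the regularized loss at `w`
relative to `−c/λ` satisfies `L_λ(w) − L_λ(−c/λ) ≤ 2λD²‖w + c/λ‖₂²`. -/
theorem rloss_suboptimality_gap_bound {d : ℕ} (hd : 1 ≤ d)
    (X : Finset (EuclideanSpace ℝ (Fin d))) (hX : X.Nonempty)
    (D : ℝ) (hD : ∀ x ∈ X, ‖x‖ ≤ D)
    (β ρ : ℝ) (hβ : β ∈ Set.Ioo (0 : ℝ) 1) (hρ : ρ ∈ Set.Ioo (0 : ℝ) 1)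
    (c : EuclideanSpace ℝ (Fin d)) (lam : ℝ) (hlam : 0 < lam) :
    ∀ w : EuclideanSpace ℝ (Fin d),
      rloss X β ρ lam c w - rloss X β ρ lam c (-(lam⁻¹ • c))
        ≤ 2 * lam * D ^ 2 * ‖w + lam⁻¹ • c‖ ^ 2 :=
  rloss_suboptimality_gap_bound_general X hX D hD β ρ hβ hρ c lam hlam

end
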